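/- If the pair (C_k, A_k) of an M-periodic system is observable at every phase (i.e., the n-step time-varying observability matrix starting at each phase k has rank n), then the cyclic reformulation pair (Č, Ǎ) is observable: the observability matrix of (Č, Ǎ) of depth Mn has rank Mn. -/

import Mathlib

/-!
The `p`-th power of the cyclic matrix carries block `j` to block `j + p` through
`A_{j+p-1} ⋯ A_j`. Hence row `(p, (j + p, s))` of the observability matrix of `(Č, Ǎ)`, applied
to `v`, is row `(p, s)` of the phase-`j` observability matrix applied to the `j`-th block of `v`.
Since the depth `Mn` is at least `n`, the whole phase-`j` matrix occurs in this way; it is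
injective, so the image of `v` determines each block of `v`, and the big matrix is injective.
-/

open Matrix
open Fin.NatCast

/-- Block cyclic shift matrix: block (i, i+1 mod M) equals I_q, zeros elsewhere. -/
def cycShift (M q : ℕ) [NeZero M] : Matrix (Fin M × Fin q) (Fin M × Fin q) ℝ :=
  fun a b => if b.1 = a.1 + 1 ∧ b.2 = a.2 then 1 else 0

/-- Block diagonal: all off-diagonal p×q blocks vanish. -/
def IsBlockDiag {M p q : ℕ} (K : Matrix (Fin M × Fin p) (Fin M × Fin q) ℝ) : Prop :=
  ∀ i j : Fin M, i ≠ j → ∀ s t, K (i, s) (j, t) = 0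

/-- Cyclic: the only possibly nonzero blocks are at positions ((j+1) mod M, j). -/
def IsCyclicMat {M p q : ℕ} [NeZero M] (K : Matrix (Fin M × Fin p) (Fin M × Fin q) ℝ) : Prop :=
  ∀ i j : Fin M, i ≠ j + 1 → ∀ s t, K (i, s) (j, t) = 0

/-- Cyclic matrix built from blocks `Bs j` placed at positions ((j+1) mod M, j). -/
def cycOf {M p q : ℕ} [NeZero M] (Bs : Fin M → Matrix (Fin p) (Fin q) ℝ) :
    Matrix (Fin M × Fin p) (Fin M × Fin q) ℝ :=
  fun a b => if a.1 = b.1 + 1 then Bs b.1 a.2 b.2 else 0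

/-- Block diagonal matrix built from diagonal blocks `Ds j`. -/
def bdiagOf {M p q : ℕ} (Ds : Fin M → Matrix (Fin p) (Fin q) ℝ) :
    Matrix (Fin M × Fin p) (Fin M × Fin q) ℝ :=
  fun a b => if a.1 = b.1 then Ds b.1 a.2 b.2 else 0

/-- Product A_{k+j-1} A_{k+j-2} ··· A_k (j factors). -/
noncomputable def prodA {M n : ℕ} [NeZero M] (As : Fin M → Matrix (Fin n) (Fin n) ℝ)
    (k : Fin M) (j : ℕ) : Matrix (Fin n) (Fin n) ℝ :=
  (((List.range j).map (fun t => As (k + ((j - 1 - t : ℕ) : Fin M)))).prod)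


theorem Matrix.rank_eq_card_width_iff_mulVec_injective {K m n : Type*} [Field K] [Fintype m]
    [Fintype n] (A : Matrix m n K) : A.rank = Fintype.card n ↔ Function.Injective A.mulVec := by
  have h := A.mulVecLin.finrank_range_add_finrank_ker
  rw [Module.finrank_fintype_fun_eq_card] at h
  rw [← coe_mulVecLin, ← LinearMap.ker_eq_bot, ← Submodule.finrank_eq_zero, rank]
  omega

section

variable {M : ℕ}

theorem prodA_succ [NeZero M] {n : ℕ}
    (As : Fin M → Matrix (Fin n) (Fin n) ℝ) (k : Fin M) (p : ℕ) :
    prodA As k (p + 1) = As (k + p) * prodA As k p := by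
  simp [prodA, List.range_succ_eq_map, Nat.sub_sub, Nat.add_comm 1, Function.comp_def]

theorem bdiagOf_mulVec_apply {p q : ℕ} (Ds : Fin M → Matrix (Fin p) (Fin q) ℝ)
    (w : Fin M × Fin q → ℝ) (i : Fin M) (s : Fin p) :
    (bdiagOf Ds *ᵥ w) (i, s) = (Ds i *ᵥ fun u => w (i, u)) s := by
  simp only [mulVec, dotProduct, Fintype.sum_prod_type, bdiagOf]
  rw [Finset.sum_eq_single i] <;> simp +contextual [eq_comm]

theorem cycOf_mulVec_apply_succ [NeZero M] {p q : ℕ} (Bs : Fin M → Matrix (Fin p) (Fin q) ℝ)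
    (w : Fin M × Fin q → ℝ) (i : Fin M) (s : Fin p) :
    (cycOf Bs *ᵥ w) (i + 1, s) = (Bs i *ᵥ fun u => w (i, u)) s := by
  simp only [mulVec, dotProduct, Fintype.sum_prod_type, cycOf, add_left_inj]
  rw [Finset.sum_eq_single i] <;> simp +contextual [eq_comm]

theorem cycOf_pow_mulVec_apply [NeZero M] {n : ℕ} (As : Fin M → Matrix (Fin n) (Fin n) ℝ)
    (v : Fin M × Fin n → ℝ) (i : Fin M) (p : ℕ) (s : Fin n) :
    (cycOf As ^ p *ᵥ v) (i + p, s) = (prodA As i p *ᵥ fun u => v (i, u)) s := by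
  induction p generalizing s with
  | zero => simp [prodA]
  | succ p ih =>
    rw [Nat.cast_succ, ← add_assoc, pow_succ', ← mulVec_mulVec, cycOf_mulVec_apply_succ,
      prodA_succ, ← mulVec_mulVec]
    simp only [ih]

theorem bdiagOf_mul_cycOf_pow_mulVec_apply [NeZero M] {n l : ℕ}
    (As : Fin M → Matrix (Fin n) (Fin n) ℝ) (Cs : Fin M → Matrix (Fin l) (Fin n) ℝ)
    (v : Fin M × Fin n → ℝ) (j : Fin M) (p : ℕ) (s : Fin l) :
    ((bdiagOf Cs * cycOf As ^ p) *ᵥ v) (j + p, s) =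
      ((Cs (j + p) * prodA As j p) *ᵥ fun u => v (j, u)) s := by
  rw [← mulVec_mulVec, bdiagOf_mulVec_apply, ← mulVec_mulVec]
  simp only [cycOf_pow_mulVec_apply]

end

theorem stmt17 (M n l : ℕ) [NeZero M]
    (As : Fin M → Matrix (Fin n) (Fin n) ℝ) (Cs : Fin M → Matrix (Fin l) (Fin n) ℝ)
    (hobs : ∀ k : Fin M,
      (Matrix.rank (fun (a : Fin n × Fin l) (t : Fin n) =>
        (Cs (k + ((a.1 : ℕ) : Fin M)) * prodA As k (a.1 : ℕ)) a.2 t)) = n) :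
    Matrix.rank (fun (a : Fin (M * n) × (Fin M × Fin l)) (c : Fin M × Fin n) =>
      (bdiagOf Cs * (cycOf As) ^ (a.1 : ℕ)) a.2 c) = M * n := by
  refine ((rank_eq_card_width_iff_mulVec_injective _).2 fun v w hvw => ?_).trans (by simp)
  ext ⟨j, t⟩
  have hphase := (rank_eq_card_width_iff_mulVec_injective _).1
    ((hobs j).trans (Fintype.card_fin n).symm)
  suffices hj : (fun u => v (j, u)) = fun u => w (j, u) from congrFun hj t
  refine hphase (funext fun ⟨p, s⟩ => ?_)
  have hp : (p : ℕ) < M * n := p.2.trans_le (Nat.le_mul_of_pos_left n (NeZero.pos M))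
  have hrow : ((bdiagOf Cs * cycOf As ^ (p : ℕ)) *ᵥ v) (j + p, s) =
      ((bdiagOf Cs * cycOf As ^ (p : ℕ)) *ᵥ w) (j + p, s) :=
    congrFun hvw (⟨p, hp⟩, (j + p, s))
  rw [bdiagOf_mul_cycOf_pow_mulVec_apply, bdiagOf_mul_cycOf_pow_mulVec_apply] at hrow
  exact hrow
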